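/- For the Ginibre ensemble in ℝ², with pair correlation function g(r) = 1 − e^{−r²} and intensity ρ = 1/π, the structure factor S(k) = 1 + ρ F_s(g−1)(k) equals 1 − e^{−k²/4}; moreover S(k)/k² → 1/4 as k → 0, so S(0) = 0 (the Ginibre ensemble is hyperuniform of class I with decay exponent α = 2). -/

import Mathlib

open MeasureTheory Real Filter

/-- The Bessel function of the first kind of real order `ν`, defined by its power series. -/
noncomputable def besselJ (ν x : ℝ) : ℝ :=
  ∑' m : ℕ, (-1 : ℝ) ^ m / (m.factorial * Real.Gamma (m + ν + 1)) *
    (x / 2) ^ (2 * (m : ℝ) + ν)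

/-- The symmetric (radial) Fourier transform in dimension 2:
`F_s(h)(k) = 2π ∫_0^∞ r h(r) J_0(kr) dr`. -/
noncomputable def fourierSym2 (h : ℝ → ℝ) (k : ℝ) : ℝ :=
  2 * π * ∫ r in Set.Ioi (0 : ℝ), r * h r * besselJ 0 (k * r)

lemma exp_tsum' (x : ℝ) : Real.exp x = ∑' n : ℕ, x^n / n.factorial := by
  rw [Real.exp_eq_exp_ℝ, NormedSpace.exp_eq_tsum_div]

lemma integrableOn_pow_exp (m : ℕ) :
    IntegrableOn (fun r : ℝ => r ^ (2*m+1) * Real.exp (-r^2)) (Set.Ioi 0) := by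
  have h := integrableOn_rpow_mul_exp_neg_rpow (s := (2*(m:ℝ)+1)) (p := 2)
    (by linarith [Nat.cast_nonneg (α := ℝ) m]) (by norm_num)
  refine h.congr_fun (fun x hx => ?_) measurableSet_Ioi
  beta_reduce
  rw [show (2*(m:ℝ)+1) = ((2*m+1 : ℕ) : ℝ) by push_cast; ring, Real.rpow_natCast,
    show (2:ℝ) = ((2:ℕ):ℝ) by norm_num, Real.rpow_natCast]

lemma int_pow (m : ℕ) :
    ∫ r in Set.Ioi (0:ℝ), r ^ (2*m+1) * Real.exp (-r^2) = m.factorial / 2 := by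
  have h := integral_rpow_mul_exp_neg_rpow (p := 2) (q := 2*(m:ℝ)+1)
    (by norm_num) (by linarith [Nat.cast_nonneg (α := ℝ) m])
  rw [show ((2*(m:ℝ)+1+1)/2) = ((m:ℝ)+1) by ring,
    show ((m:ℝ)+1) = ((m:ℕ):ℝ)+1 by norm_num, Real.Gamma_nat_eq_factorial] at h
  rw [show ((m.factorial:ℝ))/2 = 1/2 * m.factorial by ring, ← h]
  refine setIntegral_congr_fun measurableSet_Ioi (fun x hx => ?_)
  rw [show (2*(m:ℝ)+1) = ((2*m+1 : ℕ) : ℝ) by push_cast; ring, Real.rpow_natCast,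
    show (2:ℝ) = ((2:ℕ):ℝ) by norm_num, Real.rpow_natCast]

lemma besselJ0_eq (x : ℝ) :
    besselJ 0 x = ∑' m : ℕ, (-1:ℝ)^m / (m.factorial * m.factorial) * (x/2)^(2*m) := by
  unfold besselJ
  refine tsum_congr fun m => ?_
  rw [show (m:ℝ) + 0 + 1 = ((m:ℕ):ℝ) + 1 by norm_num, Real.Gamma_nat_eq_factorial,
    show (2*(m:ℝ) + 0) = ((2*m : ℕ) : ℝ) by push_cast; ring, Real.rpow_natCast]

lemma key_integral (k : ℝ) :
    ∫ r in Set.Ioi (0:ℝ), r * Real.exp (-r^2) * besselJ 0 (k*r)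
      = Real.exp (-k^2/4) / 2 := by
  set c : ℕ → ℝ := fun m => (-1:ℝ)^m * (k^2/4)^m / (m.factorial * m.factorial) with hc
  set F : ℕ → ℝ → ℝ := fun m r => c m * (r ^ (2*m+1) * Real.exp (-r^2)) with hF
  have hFint : ∀ m, IntegrableOn (F m) (Set.Ioi 0) := fun m =>
    (integrableOn_pow_exp m).const_mul (c m)
  have habs : ∀ m, |c m| = (k^2/4)^m / (m.factorial * m.factorial) := by
    intro m
    rw [hc, abs_div, abs_mul, abs_pow, abs_pow, abs_neg, abs_one, one_pow, one_mul,
      abs_of_nonneg (by positivity : (0:ℝ) ≤ k^2/4), abs_of_nonneg (by positivity)]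
  have hnorm : ∀ m, (∫ r in Set.Ioi (0:ℝ), ‖F m r‖) = |c m| * (m.factorial / 2) := by
    intro m
    rw [← int_pow m, ← integral_const_mul]
    refine setIntegral_congr_fun measurableSet_Ioi (fun x hx => ?_)
    rw [hF]
    simp only [Real.norm_eq_abs, abs_mul, abs_of_nonneg (le_of_lt (pow_pos (show (0:ℝ) < x from hx) (2*m+1))),
      abs_of_nonneg (Real.exp_nonneg _)]
  have hsum : Summable fun m => ∫ r in Set.Ioi (0:ℝ), ‖F m r‖ := by
    simp_rw [hnorm]
    have : ∀ m : ℕ, |c m| * (m.factorial / 2) = (k^2/4)^m / m.factorial / 2 := by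
      intro m
      rw [habs m]
      have h0 : (m.factorial : ℝ) ≠ 0 := Nat.cast_ne_zero.mpr m.factorial_ne_zero
      field_simp
    simp_rw [this]
    exact (Real.summable_pow_div_factorial (k^2/4)).div_const 2
  have hswap := integral_tsum_of_summable_integral_norm hFint hsum
  have hpt : ∀ r ∈ Set.Ioi (0:ℝ),
      r * Real.exp (-r^2) * besselJ 0 (k*r) = ∑' m, F m r := by
    intro r _
    rw [besselJ0_eq, ← tsum_mul_left]
    refine tsum_congr fun m => ?_
    rw [hF, hc]
    have h1 : (k*r/2)^(2*m) = (k^2/4)^m * (r^2)^m := by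
      rw [show k*r/2 = (k/2)*r by ring, mul_pow, pow_mul r 2 m,
        pow_mul (k/2) 2 m, show ((k/2)^2) = k^2/4 by ring]
    have h2 : r ^ (2*m+1) = (r^2)^m * r := by
      rw [pow_succ r (2*m), pow_mul r 2 m]
    simp only []
    rw [h1, h2]
    ring
  rw [setIntegral_congr_fun measurableSet_Ioi hpt, ← hswap]
  have hterm : ∀ m : ℕ, (∫ r in Set.Ioi (0:ℝ), F m r) = (-(k^2/4))^m / m.factorial / 2 := by
    intro m
    rw [hF]
    simp only []
    rw [integral_const_mul, int_pow, hc]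
    have h0 : (m.factorial : ℝ) ≠ 0 := Nat.cast_ne_zero.mpr m.factorial_ne_zero
    rw [neg_pow]
    field_simp
  simp_rw [hterm]
  rw [exp_tsum' (-k^2/4)]
  rw [tsum_div_const]
  congr 1
  refine tsum_congr fun m => ?_
  rw [neg_div]

lemma fourierSym2_eq (k : ℝ) :
    fourierSym2 (fun r => (1 - Real.exp (-r^2)) - 1) k = -(π * Real.exp (-k^2/4)) := by
  unfold fourierSym2
  have : ∀ r ∈ Set.Ioi (0:ℝ), r * ((1 - Real.exp (-r^2)) - 1) * besselJ 0 (k*r)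
      = -(r * Real.exp (-r^2) * besselJ 0 (k*r)) := by
    intro r _; ring
  rw [setIntegral_congr_fun measurableSet_Ioi this, integral_neg, key_integral]
  ring

/-- For the Ginibre ensemble in `ℝ²`, with pair correlation function
`g(r) = 1 − e^{−r²}` and intensity `ρ = 1/π`, the structure factor
`S(k) = 1 + ρ F_s(g−1)(k)` equals `1 − e^{−k²/4}`; moreover `S(k)/k² → 1/4` as `k → 0`,
and `S(0) = 0` (hyperuniformity of class I with `α = 2`). -/
theorem ginibre_structure_factor
    (g : ℝ → ℝ) (hg : ∀ r, g r = 1 - Real.exp (-r ^ 2))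
    (ρ : ℝ) (hρ : ρ = 1 / π)
    (S : ℝ → ℝ) (hS : ∀ k, S k = 1 + ρ * fourierSym2 (fun r => g r - 1) k) :
    (∀ k, S k = 1 - Real.exp (-k ^ 2 / 4)) ∧
    Tendsto (fun k => S k / k ^ 2) (nhdsWithin 0 {0}ᶜ) (nhds (1 / 4)) ∧
    S 0 = 0 := by
  have hSk : ∀ k, S k = 1 - Real.exp (-k ^ 2 / 4) := by
    intro k
    have hfun : (fun r => g r - 1) = (fun r => (1 - Real.exp (-r^2)) - 1) := by
      funext r; rw [hg r]
    rw [hS k, hρ, hfun, fourierSym2_eq k]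
    have hπ : (π : ℝ) ≠ 0 := Real.pi_ne_zero
    field_simp
    ring
  refine ⟨hSk, ?_, ?_⟩
  · -- limit
    set f : ℝ → ℝ := fun t => 1 - Real.exp (-t/4) with hf
    have hderiv : HasDerivAt f (1/4) 0 := by
      have h1 : HasDerivAt (fun t : ℝ => -t/4) (-(1/4)) 0 := by
        have := ((hasDerivAt_id (0:ℝ)).neg.div_const 4)
        rw [show -(1/4:ℝ) = -1/4 by ring]; exact this
      have h2 := (h1.exp).const_sub 1
      simpa using h2
    rw [hasDerivAt_iff_tendsto_slope] at hderiv
    have hsq : Tendsto (fun k : ℝ => k^2) (nhdsWithin 0 {0}ᶜ) (nhdsWithin 0 {0}ᶜ) := by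
      apply tendsto_nhdsWithin_of_tendsto_nhds_of_eventually_within
      · have : Tendsto (fun k : ℝ => k^2) (nhds 0) (nhds 0) := by
          simpa using (continuous_pow 2).tendsto (0:ℝ)
        exact this.mono_left nhdsWithin_le_nhds
      · filter_upwards [self_mem_nhdsWithin] with k hk
        exact pow_ne_zero 2 hk
    have := hderiv.comp hsq
    refine this.congr' ?_
    filter_upwards [self_mem_nhdsWithin] with k hk
    simp only [Function.comp_apply, slope_def_field, hf]
    rw [hSk k]
    field_simp
    norm_num
  · rw [hSk 0]; norm_num
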